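/- In the 'YES'-instance direction of the APX-hardness reduction: if q sets of size d cover a universe of qd elements, then in the constructed auditing instance (with R = d, deviating committee = the q corresponding main candidates, satisfying all (1 + 1/e)qd non-dummy voters) the core approximation value satisfies θ_c ≤ 1/(1 + 1/e). -/

import Mathlib

attribute [local instance] Classical.propDecidable

/-- Approval sets of the APX-hardness instance.  Candidates are `ξ` main candidates
(`Sum.inl`) — one per set of the covering instance — plus `q-1` disjoint dummy candidates
per first-group voter (`Sum.inr`).  A first-group voter `Sum.inl i` approves her own
`q-1` dummies and all main candidates; a second-group voter `Sum.inr e` (one per element)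
approves the main candidates whose set contains `e`. -/
noncomputable def covA (q d a ξ : ℕ) (F : Fin ξ → Finset (Fin (q * d))) :
    (Fin a ⊕ Fin (q * d)) → Finset (Fin ξ ⊕ (Fin a × Fin (q - 1)))
  | Sum.inl i => Finset.univ.filter (fun c => match c with
      | Sum.inl _ => True
      | Sum.inr (i', _) => i' = i)
  | Sum.inr e => Finset.univ.filter (fun c => match c with
      | Sum.inl s => e ∈ F s
      | Sum.inr _ => False)

/-- The audited committee `W`: all dummy candidates. -/
noncomputable def covW (q d a ξ : ℕ) : Finset (Fin ξ ⊕ (Fin a × Fin (q - 1))) :=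
  Finset.univ.filter (fun c => match c with
    | Sum.inr _ => True
    | _ => False)

/-! Under `W` every first-group voter gets utility `q - 1` and every element voter gets `0`,
while the `q` main candidates of a cover give the former `q` and the latter at least `1`:
so all `a + qd` voters deviate to `T` with `|T| = q`, and `R |T| / |S| = dq / (a + qd)`, which
is at most `1 / (1 + 1/e)` exactly when `a ≥ qd / e`. -/

section CoverDeviation

variable {q d a ξ : ℕ} (F : Fin ξ → Finset (Fin (q * d)))

theorem covW_inter_covA_inl (i : Fin a) :
    covW q d a ξ ∩ covA q d a ξ F (Sum.inl i) =
      Finset.univ.image fun j : Fin (q - 1) => Sum.inr (i, j) := by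
  ext (s | ⟨i', j⟩) <;> simp [covW, covA, eq_comm]

theorem card_covW_inter_covA_inl (i : Fin a) :
    (covW q d a ξ ∩ covA q d a ξ F (Sum.inl i)).card = q - 1 := by
  rw [covW_inter_covA_inl, Finset.card_image_of_injective _ fun j j' h => by simpa using h]
  simp

theorem covW_inter_covA_inr (e : Fin (q * d)) :
    covW q d a ξ ∩ covA q d a ξ F (Sum.inr e) = ∅ := by
  ext (s | p) <;> simp [covW, covA]

theorem image_inl_subset_covA_inl (Q : Finset (Fin ξ)) (i : Fin a) :
    Q.image Sum.inl ⊆ covA q d a ξ F (Sum.inl i) := by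
  intro c hc
  obtain ⟨s, -, rfl⟩ := Finset.mem_image.mp hc
  simp [covA]

theorem inl_mem_covA_inr {s : Fin ξ} {e : Fin (q * d)} :
    (Sum.inl s : Fin ξ ⊕ (Fin a × Fin (q - 1))) ∈ covA q d a ξ F (Sum.inr e) ↔ e ∈ F s := by
  simp [covA]

theorem card_covW_inter_covA_lt_of_cover (hq : 1 ≤ q) {Q : Finset (Fin ξ)} (hQcard : Q.card = q)
    (hcover : ∀ e : Fin (q * d), ∃ s ∈ Q, e ∈ F s) (v : Fin a ⊕ Fin (q * d)) :
    (covW q d a ξ ∩ covA q d a ξ F v).card < (Q.image Sum.inl ∩ covA q d a ξ F v).card := by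
  rcases v with i | e
  · rw [card_covW_inter_covA_inl, Finset.inter_eq_left.mpr (image_inl_subset_covA_inl F Q i),
      Finset.card_image_of_injective _ Sum.inl_injective, hQcard]
    omega
  · obtain ⟨s, hsQ, hse⟩ := hcover e
    rw [covW_inter_covA_inr, Finset.card_empty, Finset.card_pos]
    exact ⟨Sum.inl s, Finset.mem_inter.mpr
      ⟨Finset.mem_image_of_mem _ hsQ, (inl_mem_covA_inr F).mpr hse⟩⟩

end CoverDeviation

theorem div_add_le_one_div_one_add {a x c : ℝ} (hc : 0 ≤ c) (hax : 0 < a + x) (h : c * x ≤ a) :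
    x / (a + x) ≤ 1 / (1 + c) := by
  rw [div_le_div_iff₀ hax (by positivity)]
  linarith

theorem yes_instance_theta_c_bound_general
    (q d a ξ : ℕ) (hq : 2 ≤ q) (ha : 1 ≤ a)
    (F : Fin ξ → Finset (Fin (q * d)))
    (Q : Finset (Fin ξ)) (hQcard : Q.card = q)
    (hcover : ∀ e : Fin (q * d), ∃ s ∈ Q, e ∈ F s)
    (hae : (q * d : ℝ) / Real.exp 1 ≤ (a : ℝ)) :
    ∃ (S : Finset (Fin a ⊕ Fin (q * d)))
      (T : Finset (Fin ξ ⊕ (Fin a × Fin (q - 1)))),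
      S.Nonempty ∧
      (∀ i ∈ S, (covW q d a ξ ∩ covA q d a ξ F i).card < (T ∩ covA q d a ξ F i).card) ∧
      (d : ℝ) * (T.card : ℝ) / (S.card : ℝ) ≤ 1 / (1 + 1 / Real.exp 1) := by
  have : Nonempty (Fin a) := ⟨⟨0, ha⟩⟩
  refine ⟨Finset.univ, Q.image Sum.inl, Finset.univ_nonempty,
    fun v _ => card_covW_inter_covA_lt_of_cover F (by omega) hQcard hcover v, ?_⟩
  rw [Finset.card_image_of_injective _ Sum.inl_injective, hQcard, Finset.card_univ,
    Fintype.card_sum, Fintype.card_fin, Fintype.card_fin]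
  push_cast
  rw [mul_comm (d : ℝ)]
  refine div_add_le_one_div_one_add (by positivity) (by positivity) ?_
  rwa [one_div_mul_eq_div]

/-- 'YES'-instance direction of the APX-hardness reduction: if `q` sets of size `d`
cover a universe of `qd` elements, then in the constructed auditing instance (with
`R = d`, first group of `a ≥ qd/e` voters) deviating to the `q` covering main candidates
satisfies all non-dummy voters, so `θ_c ≤ R·|T|/|S| ≤ 1/(1 + 1/e)`. -/
theorem yes_instance_theta_c_bound
    (q d a ξ : ℕ) (hq : 2 ≤ q) (hd : 1 ≤ d) (ha : 1 ≤ a)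
    (F : Fin ξ → Finset (Fin (q * d))) (hFd : ∀ s, (F s).card = d)
    (Q : Finset (Fin ξ)) (hQcard : Q.card = q)
    (hcover : ∀ e : Fin (q * d), ∃ s ∈ Q, e ∈ F s)
    (hae : (q * d : ℝ) / Real.exp 1 ≤ (a : ℝ)) :
    ∃ (S : Finset (Fin a ⊕ Fin (q * d)))
      (T : Finset (Fin ξ ⊕ (Fin a × Fin (q - 1)))),
      S.Nonempty ∧
      (∀ i ∈ S, (covW q d a ξ ∩ covA q d a ξ F i).card < (T ∩ covA q d a ξ F i).card) ∧
      (d : ℝ) * (T.card : ℝ) / (S.card : ℝ) ≤ 1 / (1 + 1 / Real.exp 1) :=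
  yes_instance_theta_c_bound_general q d a ξ hq ha F Q hQcard hcover hae
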